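/- arXiv:1806.08992 — 4 statements merged into one kernel-verified Lean document; each statement's English description precedes it below -/
import Mathlib

section
/- For all x, y ∈ F_q^n with 0 < d_H(x,y) < n (where d_H denotes Hamming distance), the pair distance satisfies d_H(x,y) + 1 ≤ d_P(x,y) ≤ 2·d_H(x,y). Moreover, in the extreme cases d_H(x,y) = 0 or d_H(x,y) = n, one has d_P(x,y) = d_H(x,y). -/
/-- The symbol-pair distance between two vectors `x, y : Fin n → F`:
the number of indices `i` such that `(x i, x (i+1 mod n)) ≠ (y i, y (i+1 mod n))`. -/
def pairDist {F : Type*} [DecidableEq F] {n : ℕ} (x y : Fin n → F) : ℕ :=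
  (Finset.univ.filter fun i : Fin n =>
    (x i, x ⟨(i.1 + 1) % n, Nat.mod_lt _ i.pos⟩) ≠
    (y i, y ⟨(i.1 + 1) % n, Nat.mod_lt _ i.pos⟩)).card

/-!
The pair read at position `i` is wrong exactly when `i` or `i + 1` lies in the set `D` of Hamming
error positions, so the pair error set is `D ∪ (D - 1)`, of size between `#D` and `2 * #D`. It has
size `#D` only if `D - 1 ⊆ D`, and on the cycle `Fin n` the only such sets are `∅` and `univ`.
-/

open Finset

namespace Fin

variable {n : ℕ} [NeZero n]

theorem mk_succ_mod_eq_add_one (i : Fin n) :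
    (⟨(i.1 + 1) % n, Nat.mod_lt _ i.pos⟩ : Fin n) = i + 1 := by
  ext
  simp [Fin.val_add]

open Fin.NatCast in
theorem eq_univ_of_forall_sub_one_mem {s : Finset (Fin n)} (hs : s.Nonempty)
    (h : ∀ i ∈ s, i - 1 ∈ s) : s = univ := by
  obtain ⟨a, ha⟩ := hs
  have hmem : ∀ k : ℕ, a - (k : Fin n) ∈ s := by
    intro k
    induction k with
    | zero => simpa using ha
    | succ k ih => simpa [sub_add_eq_sub_sub] using h _ ih
  refine eq_univ_of_forall fun c => ?_
  simpa using hmem (a - c).val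

theorem card_lt_card_union_map_subRight_one {s : Finset (Fin n)} (hs : s.Nonempty)
    (hs' : s ≠ univ) : #s < #(s ∪ s.map (Equiv.subRight 1).toEmbedding) := by
  refine card_lt_card (Finset.ssubset_iff_subset_ne.2 ⟨subset_union_left, fun heq => hs' ?_⟩)
  exact eq_univ_of_forall_sub_one_mem hs fun i hi =>
    heq ▸ subset_union_right (mem_map_of_mem _ hi)

end Fin

theorem pairDist_eq_card_union_map {F : Type*} [DecidableEq F] {n : ℕ} [NeZero n]
    (x y : Fin n → F) :
    pairDist x y = #(({i | x i ≠ y i} : Finset (Fin n)) ∪ ({i | x i ≠ y i} : Finset (Fin n)).map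
      (Equiv.subRight 1).toEmbedding) := by
  unfold pairDist
  congr 1
  ext i
  simp [Fin.mk_succ_mod_eq_add_one, or_iff_not_imp_left]

theorem pairDist_vs_hammingDist_general {F : Type*} [DecidableEq F]
    {n : ℕ} (x y : Fin n → F) :
    (0 < hammingDist x y → hammingDist x y < n →
      hammingDist x y + 1 ≤ pairDist x y ∧ pairDist x y ≤ 2 * hammingDist x y) ∧
    (hammingDist x y = 0 ∨ hammingDist x y = n → pairDist x y = hammingDist x y) := by
  obtain rfl | hn := n.eq_zero_or_pos
  · exact ⟨fun h0 hlt => absurd h0 (by omega), fun _ => by simp [pairDist, hammingDist]⟩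
  have : NeZero n := ⟨hn.ne'⟩
  rw [pairDist_eq_card_union_map]
  set D : Finset (Fin n) := {i | x i ≠ y i}
  have hD : hammingDist x y = #D := rfl
  rw [hD]
  refine ⟨fun h0 hlt => ⟨?_, ?_⟩, ?_⟩
  · exact Fin.card_lt_card_union_map_subRight_one (card_pos.1 h0)
      (fun h => by simp [h] at hlt)
  · exact (card_union_le _ _).trans_eq (by rw [card_map, two_mul])
  · rintro (h | h)
    · simp [card_eq_zero.1 h]
    · simp [eq_univ_of_card D (by simpa using h)]

/-- For all `x, y ∈ F_q^n` with `0 < d_H(x,y) < n`, one has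
`d_H(x,y) + 1 ≤ d_P(x,y) ≤ 2 d_H(x,y)`; in the extreme cases `d_H(x,y) = 0` or
`d_H(x,y) = n`, one has `d_P(x,y) = d_H(x,y)`. -/
theorem pairDist_vs_hammingDist {F : Type*} [Field F] [Fintype F] [DecidableEq F]
    {n : ℕ} (x y : Fin n → F) :
    (0 < hammingDist x y → hammingDist x y < n →
      hammingDist x y + 1 ≤ pairDist x y ∧ pairDist x y ≤ 2 * hammingDist x y) ∧
    (hammingDist x y = 0 ∨ hammingDist x y = n → pairDist x y = hammingDist x y) :=
  pairDist_vs_hammingDist_general x y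
end

section
/- (Singleton bound for symbol-pair codes) Let q ≥ 2 be a prime power and let C ⊆ F_q^n be a code with minimum pair distance d_P(C) = d where 2 ≤ d ≤ n. Then |C| ≤ q^{n − d + 2}. -/
/-- The minimum pair distance of a code `C`. -/
noncomputable def minPairDist {F : Type*} [DecidableEq F] {n : ℕ}
    (C : Finset (Fin n → F)) : ℕ :=
  sInf {d : ℕ | ∃ x ∈ C, ∃ y ∈ C, x ≠ y ∧ pairDist x y = d}

/-! Deleting the first `d - 2` coordinates is injective on the code: two codewords agreeing on
the remaining ones have equal read pairs at every position `i ≥ d - 2` except possibly the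
wrap-around position `n - 1`, so their pair distance is at most `d - 1`. Hence `|C| ≤ q ^ (n - d + 2)`. -/

section

variable {F : Type*} [DecidableEq F] {n : ℕ}

theorem minPairDist_le_pairDist {C : Finset (Fin n → F)} {x y : Fin n → F}
    (hx : x ∈ C) (hy : y ∈ C) (hxy : x ≠ y) : minPairDist C ≤ pairDist x y :=
  Nat.sInf_le ⟨x, hx, y, hy, hxy, rfl⟩

theorem pairDist_le_of_eqOn_ge {x y : Fin n → F} {k : ℕ}
    (h : ∀ i : Fin n, k ≤ (i : ℕ) → x i = y i) : pairDist x y ≤ k + 1 := by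
  have hpos : ∀ i ∈ Finset.univ.filter fun i : Fin n =>
      (x i, x ⟨(i.1 + 1) % n, Nat.mod_lt _ i.pos⟩) ≠
      (y i, y ⟨(i.1 + 1) % n, Nat.mod_lt _ i.pos⟩),
      (i : ℕ) ∈ insert (n - 1) (Finset.range k) := by
    intro i hi
    simp only [Finset.mem_filter, Finset.mem_univ, true_and] at hi
    simp only [Finset.mem_insert, Finset.mem_range]
    by_contra! hik
    have hnext : (i.1 + 1) % n = i.1 + 1 := Nat.mod_eq_of_lt (by omega)
    exact hi (by rw [h i hik.2, h _ (by simp only [hnext]; omega)])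
  calc pairDist x y ≤ (insert (n - 1) (Finset.range k)).card :=
        Finset.card_le_card_of_injOn _ hpos Fin.val_injective.injOn
    _ ≤ k + 1 := by simpa using Finset.card_insert_le (n - 1) (Finset.range k)

theorem Fin.card_subtype_le_val (k : ℕ) : Fintype.card {i : Fin n // k ≤ (i : ℕ)} = n - k := by
  rw [Fintype.card_subtype]
  have := Finset.card_filter_add_card_filter_not (s := Finset.univ) fun i : Fin n => (i : ℕ) < k
  simp only [Fin.card_filter_val_lt, not_lt, Finset.card_univ, Fintype.card_fin] at this
  omega

theorem card_le_pow_of_forall_add_two_le_pairDist [Fintype F] (C : Finset (Fin n → F)) {k : ℕ}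
    (hC : ∀ x ∈ C, ∀ y ∈ C, x ≠ y → k + 2 ≤ pairDist x y) :
    C.card ≤ Fintype.card F ^ (n - k) := by
  have hinj : Set.InjOn (fun (x : Fin n → F) (i : {i : Fin n // k ≤ (i : ℕ)}) => x i) C := by
    intro x hx y hy hxy
    by_contra hne
    have := pairDist_le_of_eqOn_ge fun i hi => congrFun hxy ⟨i, hi⟩
    have := hC x hx y hy hne
    omega
  calc C.card ≤ Fintype.card ({i : Fin n // k ≤ (i : ℕ)} → F) :=
        Finset.card_le_card_of_injOn _ (fun _ _ => Finset.mem_univ _) hinj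
    _ = Fintype.card F ^ (n - k) := by rw [Fintype.card_fun, Fin.card_subtype_le_val]

end

theorem singleton_bound_pair_general {F : Type*} [Fintype F] [DecidableEq F]
    {n q d : ℕ} (hq : Fintype.card F = q)
    (C : Finset (Fin n → F))
    (hd : minPairDist C = d) (hd2 : 2 ≤ d) (hdn : d ≤ n) :
    C.card ≤ q ^ (n - d + 2) := by
  have hC : ∀ x ∈ C, ∀ y ∈ C, x ≠ y → d - 2 + 2 ≤ pairDist x y := fun x hx y hy hxy => by
    rw [Nat.sub_add_cancel hd2, ← hd]
    exact minPairDist_le_pairDist hx hy hxy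
  calc C.card ≤ Fintype.card F ^ (n - (d - 2)) := card_le_pow_of_forall_add_two_le_pairDist C hC
    _ = q ^ (n - d + 2) := by rw [hq, Nat.sub_sub_right n hd2, Nat.sub_add_comm hdn]

/-- (Singleton bound for symbol-pair codes) If `C ⊆ F_q^n` is a code with minimum
pair distance `d`, where `2 ≤ d ≤ n`, then `|C| ≤ q^(n - d + 2)`. -/
theorem singleton_bound_pair {F : Type*} [Field F] [Fintype F] [DecidableEq F]
    {n q d : ℕ} (hq : Fintype.card F = q)
    (C : Finset (Fin n → F)) (hC : 2 ≤ C.card)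
    (hd : minPairDist C = d) (hd2 : 2 ≤ d) (hdn : d ≤ n) :
    C.card ≤ q ^ (n - d + 2) :=
  singleton_bound_pair_general hq C hd hd2 hdn
end

section
/- For any x ∈ F_q^n (n ≥ 2) and any integer d with 0 ≤ d ≤ n−1, the symbol-pair ball satisfies |B_P(x,d)| = 1 + Σ_{i=1}^{d} Σ_{k=⌈i/2⌉}^{i−1} D(n, k, i−k)·(q−1)^k, where D(n,ℓ,w) = (n/w)·C(ℓ−1, w−1)·C(n−ℓ−1, w−1); moreover D(n,ℓ,w) also equals C(ℓ−1, w−1)·[C(n−ℓ−1, w) + 2·C(n−ℓ−1, w−1)] + C(n−ℓ−1, w−1)·C(ℓ−1, w). -/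
/-- The symbol-pair ball of radius `r` centered at `x`. -/
def pairBall {F : Type*} [Fintype F] [DecidableEq F] {n : ℕ}
    (x : Fin n → F) (r : ℕ) : Finset (Fin n → F) :=
  Finset.univ.filter fun y => pairDist x y ≤ r

/-- `D(n, ℓ, w) = (n/w) · C(ℓ−1, w−1) · C(n−ℓ−1, w−1)`. -/
noncomputable def Dpair (n ℓ w : ℕ) : ℝ :=
  (n : ℝ) / w * ((ℓ - 1).choose (w - 1)) * ((n - ℓ - 1).choose (w - 1))

/-!
Write `e = diffPattern x y` for the set of positions where `y` differs from `x`, viewed as a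
cyclic binary word. A pair `(y_i, y_{i+1})` differs from `(x_i, x_{i+1})` iff `e_i` or `e_{i+1}`
is set, so `d_P(x, y) = k + b`, where `k` is the number of ones of `e` and `b` its number of
cyclic runs of ones (equivalently of rises `0 → 1`); each pattern with `k` ones comes from
`(q - 1)^k` words `y`. Counting patterns with `k` ones and `b` runs: rotating the word shows that
each of the `n` positions is a rise equally often, so `b · N = n · N₀`, where `N₀` counts patterns
with a rise at position `0`. Those are `0 1 f` for a linear word `f`, and a recursion on the first
letter gives `N₀ = C(k-1, b-1) · C(n-k-1, b-1)`, i.e. `N = D(n, k, b)`.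
-/

open Finset

namespace SymbolPair

def trueCount {ι : Type*} [Fintype ι] (g : ι → Bool) : ℕ := #{i | g i = true}

lemma trueCount_le {ι : Type*} [Fintype ι] (g : ι → Bool) : trueCount g ≤ Fintype.card ι :=
  card_filter_le _ _

lemma trueCount_eq_zero_iff {ι : Type*} [Fintype ι] {g : ι → Bool} :
    trueCount g = 0 ↔ g = fun _ => false := by
  simp [trueCount, funext_iff]

lemma card_filter_cons {α : Type*} [Fintype α] {m : ℕ} (P : (Fin (m + 1) → α) → Prop)
    [DecidablePred P] :
    #{f | P f} = ∑ a, #{f : Fin m → α | P (Fin.cons a f)} := by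
  simp only [card_filter]
  rw [← (Fin.consEquiv fun _ => α).sum_comp, Fintype.sum_prod_type]
  rfl

lemma trueCount_cons {m : ℕ} (a : Bool) (f : Fin m → Bool) :
    trueCount (Fin.cons a f : Fin (m + 1) → Bool) = trueCount f + a.toNat := by
  simp only [trueCount, card_filter, Fin.sum_univ_succ, Fin.cons_zero, Fin.cons_succ]
  cases a <;> simp [add_comm]

def rises {m : ℕ} (e : Fin (m + 1) → Bool) : ℕ :=
  #{i : Fin m | e i.castSucc = false ∧ e i.succ = true}

lemma rises_cons {m : ℕ} (a : Bool) (e : Fin (m + 1) → Bool) :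
    rises (Fin.cons a e : Fin (m + 2) → Bool) = rises e + (!a && e 0).toNat := by
  simp only [rises, card_filter, Fin.sum_univ_succ (n := m), Fin.cons_zero, Fin.cons_succ,
    Fin.castSucc_zero, ← Fin.succ_castSucc]
  cases a <;> cases e 0 <;> simp [add_comm]

lemma eq_false_of_rises_eq_zero {m : ℕ} {e : Fin (m + 1) → Bool} (h0 : e 0 = false)
    (h : rises e = 0) (i : Fin (m + 1)) : e i = false := by
  induction i using Fin.induction with
  | zero => exact h0
  | succ i ih =>
    rw [rises, card_eq_zero, filter_eq_empty_iff] at h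
    simpa [ih] using h (mem_univ i)

def linearWords (p : Bool) (m j c : ℕ) : Finset (Fin m → Bool) :=
  {f | trueCount f = j ∧ rises (Fin.cons p f : Fin (m + 1) → Bool) = c}

lemma card_linearWords_true_succ (m j c : ℕ) :
    #(linearWords true (m + 1) (j + 1) c)
      = #(linearWords true m j c) + #(linearWords false m (j + 1) c) := by
  rw [linearWords, card_filter_cons, Fintype.sum_bool]
  simp [trueCount_cons, rises_cons, linearWords]

lemma card_linearWords_false_succ (m j c : ℕ) :
    #(linearWords false (m + 1) (j + 1) (c + 1))
      = #(linearWords true m j c) + #(linearWords false m (j + 1) (c + 1)) := by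
  rw [linearWords, card_filter_cons, Fintype.sum_bool]
  simp [trueCount_cons, rises_cons, linearWords]

lemma card_linearWords_of_lt {p : Bool} {m j c : ℕ} (h : m < j) : #(linearWords p m j c) = 0 := by
  rw [card_eq_zero, linearWords, filter_eq_empty_iff]
  rintro f - ⟨rfl, -⟩
  exact absurd (trueCount_le f) (by simpa using h)

lemma card_linearWords_zero (p : Bool) (m c : ℕ) :
    #(linearWords p m 0 c) = if c = 0 then 1 else 0 := by
  have hrises : rises (Fin.cons p fun _ => false : Fin (m + 1) → Bool) = 0 := by
    simp [rises, Fin.cons_succ]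
  have : linearWords p m 0 c = if c = 0 then {fun _ => false} else ∅ := by
    ext f
    by_cases hf : f = fun _ => false
    · subst hf
      have h0 : trueCount (fun _ : Fin m => false) = 0 := trueCount_eq_zero_iff.mpr rfl
      split_ifs with hc <;> simp [linearWords, h0, hrises] <;> omega
    · split_ifs <;> simp [linearWords, trueCount_eq_zero_iff, hf]
  rw [this]
  split_ifs <;> rfl

lemma card_linearWords_false_zero (m j : ℕ) : #(linearWords false m (j + 1) 0) = 0 := by
  rw [card_eq_zero, linearWords, filter_eq_empty_iff]
  rintro f - ⟨hj, hr⟩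
  have : f = fun _ => false := funext fun i => by
    simpa using eq_false_of_rises_eq_zero rfl hr i.succ
  simp [this, trueCount] at hj

/-- After a leading `true`, the `j` trues split into a possibly empty first block and `c` runs,
and the `m - j` falses into `c` nonempty gaps and a possibly empty tail; after a leading `false`,
the `j + 1` trues form `c + 1` runs and the falses `c` gaps plus two possibly empty ends. -/
theorem card_linearWords (m : ℕ) :
    (∀ j c, j ≤ m → #(linearWords true m j c) = j.choose c * (m - j).choose c) ∧
      ∀ j c, #(linearWords false m (j + 1) (c + 1)) = j.choose c * (m - j).choose (c + 1) := by
  induction m with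
  | zero =>
    refine ⟨fun j c hj => ?_, fun j c => ?_⟩
    · obtain rfl : j = 0 := by omega
      rw [card_linearWords_zero]
      cases c <;> simp
    · rw [card_linearWords_of_lt (by omega)]
      simp
  | succ m ih =>
    refine ⟨fun j c hj => ?_, fun j c => ?_⟩
    · cases j with
      | zero =>
        rw [card_linearWords_zero]
        cases c <;> simp
      | succ j =>
        rw [card_linearWords_true_succ, ih.1 j c (by omega), Nat.add_sub_add_right]
        cases c with
        | zero => simp [card_linearWords_false_zero]
        | succ c => rw [ih.2, Nat.choose_succ_succ' j]; ring
    · rw [card_linearWords_false_succ, ih.2]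
      rcases le_or_gt j m with hj | hj
      · rw [ih.1 j c hj, Nat.sub_add_comm hj, Nat.choose_succ_succ' (m - j)]
        ring
      · rw [card_linearWords_of_lt hj, Nat.sub_eq_zero_of_le hj.le, Nat.sub_eq_zero_of_le hj]
        simp

section Cyclic

variable {n : ℕ} [NeZero n]

def cyclicRises (g : Fin n → Bool) : ℕ := #{i | g i = false ∧ g (i + 1) = true}

def pairWeight (g : Fin n → Bool) : ℕ := trueCount g + cyclicRises g

variable (n) in
def cyclicWords (k b : ℕ) : Finset (Fin n → Bool) := {g | trueCount g = k ∧ cyclicRises g = b}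

lemma trueCount_comp_add_right (g : Fin n → Bool) (a : Fin n) :
    trueCount (fun i => g (i + a)) = trueCount g := by
  simp only [trueCount, card_filter]
  exact Equiv.sum_comp (Equiv.addRight a) fun i => if g i = true then 1 else 0

lemma cyclicRises_comp_add_right (g : Fin n → Bool) (a : Fin n) :
    cyclicRises (fun i => g (i + a)) = cyclicRises g := by
  simp only [cyclicRises, card_filter, add_right_comm _ (1 : Fin n) a]
  exact Equiv.sum_comp (Equiv.addRight a) fun i => if g i = false ∧ g (i + 1) = true then 1 else 0

lemma cyclicRises_le_trueCount (g : Fin n → Bool) : cyclicRises g ≤ trueCount g :=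
  card_le_card_of_injOn (· + 1) (fun i hi => by simp_all) (add_left_injective 1).injOn

lemma cyclicRises_eq_rises {m : ℕ} (g : Fin (m + 1) → Bool) (h0 : g 0 = false) :
    cyclicRises g = rises g := by
  simp only [cyclicRises, rises, card_filter, Fin.sum_univ_castSucc, Fin.last_add_one, h0,
    Fin.coeSucc_eq_succ]
  simp

lemma cyclicRises_pos {g : Fin n → Bool} (hpos : 0 < trueCount g) (hlt : trueCount g < n) :
    0 < cyclicRises g := by
  obtain ⟨m, rfl⟩ : ∃ m, n = m + 1 := Nat.exists_eq_succ_of_ne_zero (NeZero.ne n)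
  obtain ⟨a, ha⟩ : ∃ a, g a = false := by
    by_contra! h
    have : trueCount g = m + 1 := by simp [trueCount, h]
    omega
  rw [Nat.pos_iff_ne_zero, ← cyclicRises_comp_add_right g a,
    cyclicRises_eq_rises _ (by simpa using ha)]
  intro h
  have := trueCount_eq_zero_iff.mpr (funext (eq_false_of_rises_eq_zero (by simpa using ha) h))
  rw [trueCount_comp_add_right] at this
  omega

/-- For `pairWeight g = 0` the interval is `Icc 0 0`, by truncated subtraction. -/
lemma trueCount_mem_Icc {g : Fin n → Bool} (hlt : pairWeight g < n) :
    trueCount g ∈ Icc ((pairWeight g + 1) / 2) (pairWeight g - 1) := by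
  have hle := cyclicRises_le_trueCount g
  have hpos : trueCount g = 0 ∨ 0 < cyclicRises g := by
    rcases Nat.eq_zero_or_pos (trueCount g) with h | h
    · exact .inl h
    · exact .inr (cyclicRises_pos h (by unfold pairWeight at hlt; omega))
  rw [mem_Icc, pairWeight]
  omega

lemma sum_filter_pairWeight_eq {M : Type*} [AddCommMonoid M] (w : ℕ → M) {i : ℕ} (hi : i < n) :
    ∑ g : Fin n → Bool with pairWeight g = i, w (trueCount g)
      = ∑ k ∈ Icc ((i + 1) / 2) (i - 1), #(cyclicWords n k (i - k)) • w k := by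
  rw [← sum_fiberwise_of_maps_to (g := trueCount) (t := Icc ((i + 1) / 2) (i - 1))]
  · refine sum_congr rfl fun k hk => ?_
    have hfib : {g ∈ ({g | pairWeight g = i} : Finset (Fin n → Bool)) | trueCount g = k}
        = cyclicWords n k (i - k) := by
      ext g
      simp only [cyclicWords, mem_filter, mem_univ, true_and]
      have := mem_Icc.mp hk
      unfold pairWeight
      omega
    rw [hfib, sum_congr rfl fun g hg => by rw [(mem_filter.mp hg).2.1], sum_const]
  · intro g hg
    rw [(mem_filter.mp hg).2.symm]
    exact trueCount_mem_Icc ((mem_filter.mp hg).2 ▸ hi)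

lemma card_cyclicWords_rise_at (k b : ℕ) (a : Fin n) :
    #{g ∈ cyclicWords n k b | g a = false ∧ g (a + 1) = true}
      = #{g ∈ cyclicWords n k b | g 0 = false ∧ g 1 = true} := by
  apply card_nbij' (fun g i => g (i + a)) (fun g i => g (i + -a))
  · intro g hg
    simp_all [cyclicWords, trueCount_comp_add_right, cyclicRises_comp_add_right, add_comm 1 a]
  · intro g hg
    simp_all [cyclicWords, trueCount_comp_add_right, cyclicRises_comp_add_right,
      add_right_comm a 1]
  · intro g _
    simp
  · intro g _
    simp

lemma mul_card_cyclicWords_eq_card_rise_at_zero (k b : ℕ) :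
    b * #(cyclicWords n k b) = n * #{g ∈ cyclicWords n k b | g 0 = false ∧ g 1 = true} := by
  calc b * #(cyclicWords n k b)
      = ∑ g ∈ cyclicWords n k b, cyclicRises g := by
        rw [sum_const_nat fun g hg => (mem_filter.mp hg).2.2, mul_comm]
    _ = ∑ a, #{g ∈ cyclicWords n k b | g a = false ∧ g (a + 1) = true} := by
        simp only [cyclicRises, card_filter]
        exact sum_comm
    _ = n * #{g ∈ cyclicWords n k b | g 0 = false ∧ g 1 = true} := by
        simp [card_cyclicWords_rise_at]

lemma card_cyclicWords_rise_at_zero (m j c : ℕ) :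
    #{g ∈ cyclicWords (m + 2) (j + 1) (c + 1) | g 0 = false ∧ g 1 = true}
      = #(linearWords true m j c) := by
  rw [cyclicWords, filter_filter, card_filter_cons, Fintype.sum_bool, card_filter_cons,
    card_filter_cons, Fintype.sum_bool, Fintype.sum_bool]
  simp [trueCount_cons, cyclicRises_eq_rises, rises_cons, linearWords]

theorem mul_card_cyclicWords_eq_choose {k b : ℕ} (hk : 1 ≤ k) (hb : 1 ≤ b) (hkn : k < n) :
    b * #(cyclicWords n k b) = n * ((k - 1).choose (b - 1) * (n - k - 1).choose (b - 1)) := by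
  obtain ⟨m, rfl⟩ : ∃ m, n = m + 2 := ⟨n - 2, by omega⟩
  obtain ⟨j, rfl⟩ : ∃ j, k = j + 1 := ⟨k - 1, by omega⟩
  obtain ⟨c, rfl⟩ : ∃ c, b = c + 1 := ⟨b - 1, by omega⟩
  rw [mul_card_cyclicWords_eq_card_rise_at_zero, card_cyclicWords_rise_at_zero,
    (card_linearWords m).1 j c (by omega)]
  congr 3
  omega

lemma card_cyclicWords_eq_Dpair {k b : ℕ} (hk : 1 ≤ k) (hb : 1 ≤ b) (hkn : k < n) :
    (#(cyclicWords n k b) : ℝ) = Dpair n k b := by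
  have h : (b : ℝ) * #(cyclicWords n k b)
      = n * ((k - 1).choose (b - 1) * (n - k - 1).choose (b - 1)) := by
    exact_mod_cast mul_card_cyclicWords_eq_choose hk hb hkn
  rw [Dpair, div_mul_eq_mul_div, div_mul_eq_mul_div, eq_div_iff (by positivity)]
  linarith

end Cyclic

section PairDistance

variable {F : Type*} [DecidableEq F] {n : ℕ}

def diffPattern (x y : Fin n → F) : Fin n → Bool := fun i => decide (x i ≠ y i)

lemma card_filter_diffPattern_eq [Fintype F] (x : Fin n → F) (g : Fin n → Bool) :
    #{y | diffPattern x y = g} = (Fintype.card F - 1) ^ trueCount g := by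
  have : ({y | diffPattern x y = g} : Finset (Fin n → F))
      = Fintype.piFinset fun i => if g i then univ.erase (x i) else {x i} := by
    ext y
    simp only [mem_filter, mem_univ, true_and, Fintype.mem_piFinset, funext_iff, diffPattern]
    refine forall_congr' fun i => ?_
    cases g i <;> simp [eq_comm (a := y i)]
  rw [this, Fintype.card_piFinset]
  simp only [apply_ite card, card_erase_of_mem (mem_univ _), card_univ, card_singleton]
  rw [prod_ite, prod_const, prod_const_one, mul_one]
  rfl

variable [NeZero n]

lemma pairDist_eq_pairWeight (x y : Fin n → F) : pairDist x y = pairWeight (diffPattern x y) := by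
  have hsucc (i : Fin n) : (⟨(i.1 + 1) % n, Nat.mod_lt _ i.pos⟩ : Fin n) = i + 1 :=
    Fin.ext (by simp [Fin.val_add])
  rw [pairDist, pairWeight, trueCount, cyclicRises, card_filter, card_filter, card_filter,
    ← sum_add_distrib]
  refine sum_congr rfl fun i _ => ?_
  rw [hsucc]
  by_cases h1 : x i = y i <;> by_cases h2 : x (i + 1) = y (i + 1) <;> simp [diffPattern, h1, h2]

lemma pairDist_eq_zero_iff {x y : Fin n → F} : pairDist x y = 0 ↔ x = y := by
  have := cyclicRises_le_trueCount (diffPattern x y)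
  rw [pairDist_eq_pairWeight, pairWeight, Nat.add_eq_zero_iff, and_iff_left_of_imp (by omega),
    trueCount_eq_zero_iff]
  simp [diffPattern, funext_iff]

lemma card_filter_pairDist_eq [Fintype F] (x : Fin n → F) {i : ℕ} (hi : i < n) :
    #{y | pairDist x y = i}
      = ∑ k ∈ Icc ((i + 1) / 2) (i - 1), #(cyclicWords n k (i - k)) * (Fintype.card F - 1) ^ k := by
  calc #{y | pairDist x y = i}
      = ∑ g : Fin n → Bool with pairWeight g = i, #{y | diffPattern x y = g} := by
        rw [card_eq_sum_card_fiberwise (f := diffPattern x)]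
        · refine sum_congr rfl fun g hg => ?_
          rw [filter_filter]
          refine congrArg card (filter_congr fun y _ => ?_)
          rw [pairDist_eq_pairWeight, and_iff_right_iff_imp]
          rintro rfl
          exact (mem_filter.mp hg).2
        · intro y hy
          simpa [← pairDist_eq_pairWeight] using hy
    _ = ∑ g : Fin n → Bool with pairWeight g = i, (Fintype.card F - 1) ^ trueCount g :=
        sum_congr rfl fun g _ => card_filter_diffPattern_eq x g
    _ = _ := sum_filter_pairWeight_eq _ hi

end PairDistance

lemma card_pairBall_eq {F : Type*} [Fintype F] [DecidableEq F] {n : ℕ} (x : Fin n → F) (d : ℕ) :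
    #(pairBall x d) = ∑ i ∈ range (d + 1), #{y | pairDist x y = i} := by
  rw [card_eq_sum_card_fiberwise (f := pairDist x) (t := range (d + 1))]
  · refine sum_congr rfl fun i hi => ?_
    rw [pairBall, filter_filter]
    refine congrArg card (filter_congr fun y _ => ?_)
    rw [and_iff_right_iff_imp]
    rintro rfl
    exact Nat.lt_succ_iff.mp (mem_range.mp hi)
  · intro y hy
    simpa [pairBall, Nat.lt_succ_iff] using hy

theorem Dpair_eq_choose {n ℓ w : ℕ} (hw : 1 ≤ w) (hwℓ : w ≤ ℓ) (hℓw : ℓ + w ≤ n - 1) :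
    Dpair n ℓ w =
      ((ℓ - 1).choose (w - 1) : ℝ) *
          (((n - ℓ - 1).choose w : ℝ) + 2 * ((n - ℓ - 1).choose (w - 1) : ℝ)) +
        ((n - ℓ - 1).choose (w - 1) : ℝ) * ((ℓ - 1).choose w : ℝ) := by
  obtain ⟨v, rfl⟩ : ∃ v, w = v + 1 := ⟨w - 1, by omega⟩
  obtain ⟨s, hs⟩ : ∃ s, ℓ - 1 = v + s := ⟨ℓ - 1 - v, by omega⟩
  obtain ⟨r, hr⟩ : ∃ r, n - ℓ - 1 = v + r + 1 := ⟨n - ℓ - 2 - v, by omega⟩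
  have hn : (n : ℝ) = 2 * v + s + r + 3 := by norm_cast; omega
  have h1 : ((v + s).choose (v + 1) : ℝ) * (v + 1) = (v + s).choose v * s := by
    have := Nat.choose_succ_right_eq (v + s) v
    rw [Nat.add_sub_cancel_left] at this
    exact_mod_cast this
  have h2 : ((v + r + 1).choose (v + 1) : ℝ) * (v + 1) = (v + r + 1).choose v * (r + 1) := by
    have := Nat.choose_succ_right_eq (v + r + 1) v
    rw [show v + r + 1 - v = r + 1 by omega] at this
    exact_mod_cast this
  rw [Dpair, hs, hr, hn, Nat.add_sub_cancel]
  push_cast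
  field_simp
  linear_combination (-((v + s).choose v : ℝ)) * h2 - ((v + r + 1).choose v : ℝ) * h1

end SymbolPair

open SymbolPair

theorem pairBall_card_general {F : Type*} [Fintype F] [DecidableEq F]
    {n q d : ℕ} (hq : Fintype.card F = q) (hn : 2 ≤ n) (hd : d ≤ n - 1)
    (x : Fin n → F) :
    (((pairBall x d).card : ℝ) =
      1 + ∑ i ∈ Finset.Icc 1 d, ∑ k ∈ Finset.Icc ((i + 1) / 2) (i - 1),
        Dpair n k (i - k) * ((q : ℝ) - 1) ^ k) ∧
    (∀ ℓ w : ℕ, 1 ≤ w → w ≤ ℓ → ℓ + w ≤ n - 1 →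
      Dpair n ℓ w =
        ((ℓ - 1).choose (w - 1) : ℝ) *
            (((n - ℓ - 1).choose w : ℝ) + 2 * ((n - ℓ - 1).choose (w - 1) : ℝ)) +
          ((n - ℓ - 1).choose (w - 1) : ℝ) * ((ℓ - 1).choose w : ℝ)) := by
  have : NeZero n := ⟨by omega⟩
  refine ⟨?_, fun ℓ w => Dpair_eq_choose⟩
  have hq1 : 1 ≤ q := hq ▸ Fintype.card_pos_iff.mpr ⟨x 0⟩
  have hball_zero : #{y | pairDist x y = 0} = 1 := by
    simp [pairDist_eq_zero_iff, filter_eq]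
  rw [card_pairBall_eq, range_eq_Ico, sum_eq_sum_Ico_succ_bot (by omega), hball_zero,
    Ico_add_one_right_eq_Icc, Nat.cast_add, Nat.cast_one, Nat.cast_sum]
  congr 1
  refine sum_congr rfl fun i hi => ?_
  rw [mem_Icc] at hi
  rw [card_filter_pairDist_eq x (by omega), Nat.cast_sum]
  refine sum_congr rfl fun k hk => ?_
  rw [mem_Icc] at hk
  rw [Nat.cast_mul, card_cyclicWords_eq_Dpair (by omega) (by omega) (by omega), hq, Nat.cast_pow,
    Nat.cast_sub hq1, Nat.cast_one]

/-- For any `x ∈ F_q^n` (`n ≥ 2`) and integer `0 ≤ d ≤ n − 1`, the symbol-pair ball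
satisfies `|B_P(x,d)| = 1 + Σ_{i=1}^{d} Σ_{k=⌈i/2⌉}^{i−1} D(n,k,i−k)·(q−1)^k`, where
`D(n,ℓ,w) = (n/w)·C(ℓ−1,w−1)·C(n−ℓ−1,w−1)`; moreover `D(n,ℓ,w)` also equals
`C(ℓ−1,w−1)·[C(n−ℓ−1,w) + 2·C(n−ℓ−1,w−1)] + C(n−ℓ−1,w−1)·C(ℓ−1,w)`. -/
theorem pairBall_card {F : Type*} [Field F] [Fintype F] [DecidableEq F]
    {n q d : ℕ} (hq : Fintype.card F = q) (hn : 2 ≤ n) (hd : d ≤ n - 1)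
    (x : Fin n → F) :
    (((pairBall x d).card : ℝ) =
      1 + ∑ i ∈ Finset.Icc 1 d, ∑ k ∈ Finset.Icc ((i + 1) / 2) (i - 1),
        Dpair n k (i - k) * ((q : ℝ) - 1) ^ k) ∧
    (∀ ℓ w : ℕ, 1 ≤ w → w ≤ ℓ → ℓ + w ≤ n - 1 →
      Dpair n ℓ w =
        ((ℓ - 1).choose (w - 1) : ℝ) *
            (((n - ℓ - 1).choose w : ℝ) + 2 * ((n - ℓ - 1).choose (w - 1) : ℝ)) +
          ((n - ℓ - 1).choose (w - 1) : ℝ) * ((ℓ - 1).choose w : ℝ)) :=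
  pairBall_card_general hq hn hd x
end

section
/- Let q be a prime power, γ a primitive element of F_q, and let k, n be integers with 1 ≤ k ≤ n − 2 and n ≤ q − 1. Then the Reed–Solomon code RS[n,k] is ((2/3)·(n−2−k), q)_P-list decodable; that is, for every y ∈ F_q^n, the number of codewords c ∈ RS[n,k] with d_P(y, c) ≤ (2/3)·(n−2−k) is at most q. -/
open scoped Classical

/-!
Interpolate the received word `y`: by counting dimensions there is a nonzero
`Q(X, Y₁, Y₂) = A₀ + A₁ Y₁ + A₂ Y₂` with `deg A₀ < D + k`, `deg A₁, deg A₂ ≤ D`,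
`D = ⌊(n - k + 1)/3⌋`, vanishing at every `(γ^i, y_i, y_{i+1})`. If `c = (f(γ^i))_i` is within
pair distance `d ≤ (2/3)(n - 2 - k)` of `y`, then `Q(X, f(X), f(γX))` has degree `< D + k` and
vanishes at the `≥ n - d - 1 > D + k - 1` points `γ^i` with `i + 1 < n` where the pairs agree,
so it is zero. For `(A₁, A₂) ≠ 0` the lowest-order term of `A₁ g + A₂ g(γX) = 0` forces
`A₁[i₀] + A₂[i₀] γ^m = 0`, where `i₀` is the lowest index with `(A₁[i₀], A₂[i₀]) ≠ 0` and `m`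
is the trailing degree of `g`; since `γ` has order `> k`
this pins `m` down, so the solutions `f` are determined by a single coefficient and there are at
most `q` of them.
-/

open Polynomial Finset

theorem Polynomial.coeff_mul_add_of_forall_coeff_eq_zero {R : Type*} [CommSemiring R]
    {p q : R[X]} {a b : ℕ} (hp : ∀ i < a, p.coeff i = 0) (hq : ∀ j < b, q.coeff j = 0) :
    (p * q).coeff (a + b) = p.coeff a * q.coeff b := by
  obtain ⟨p, rfl⟩ := X_pow_dvd_iff.2 hp
  obtain ⟨q, rfl⟩ := X_pow_dvd_iff.2 hq
  rw [mul_mul_mul_comm, ← pow_add]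
  simp [coeff_X_pow_mul']

theorem Polynomial.natDegree_lt_of_mem_degreeLT {R : Type*} [Semiring R] {p : R[X]} {m : ℕ}
    (hm : 0 < m) (hp : p ∈ R[X]_m) : p.natDegree < m := by
  rcases eq_or_ne p 0 with rfl | hp0
  · simpa using hm
  · exact (natDegree_lt_iff_degree_lt hp0).2 (mem_degreeLT.1 hp)

theorem Finset.card_le_card_of_subset_image_of_injOn {α β γ : Type*} [Fintype γ]
    {s : Finset α} {t : Set β} (e : β → α) {φ : β → γ} (hφ : Set.InjOn φ t)
    (hs : ∀ a ∈ s, ∃ b ∈ t, e b = a) :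
    #s ≤ Fintype.card γ := by
  rcases isEmpty_or_nonempty β with hβ | hβ
  · rw [eq_empty_of_forall_notMem fun a ha => isEmptyElim (hs a ha).choose, card_empty]
    exact Nat.zero_le _
  choose! b hbt hb using hs
  refine (card_le_card_of_injOn (φ ∘ b) (fun _ _ => mem_univ _) fun a ha a' ha' h => ?_).trans_eq
    card_univ
  rw [← hb a ha, ← hb a' ha', hφ (hbt a ha) (hbt a' ha') h]

section ShiftEquation

variable {R : Type*} [CommRing R] [IsDomain R] {A₁ A₂ g : R[X]} {γ : R}

theorem coeff_add_mul_pow_natTrailingDegree_eq_zero {i₀ : ℕ}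
    (hA : ∀ i < i₀, A₁.coeff i = 0 ∧ A₂.coeff i = 0) (hg : g ≠ 0)
    (h : A₁ * g + A₂ * g.comp (C γ * X) = 0) :
    A₁.coeff i₀ + A₂.coeff i₀ * γ ^ g.natTrailingDegree = 0 := by
  set m := g.natTrailingDegree
  have hlow : ∀ j < m, g.coeff j = 0 := fun j hj => coeff_eq_zero_of_lt_natTrailingDegree hj
  have hlow' : ∀ j < m, (g.comp (C γ * X)).coeff j = 0 := fun j hj => by
    rw [comp_C_mul_X_coeff, hlow j hj, zero_mul]
  have hcoeff := congrArg (coeff · (i₀ + m)) h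
  simp only [coeff_add, coeff_zero,
    coeff_mul_add_of_forall_coeff_eq_zero (fun i hi => (hA i hi).1) hlow,
    coeff_mul_add_of_forall_coeff_eq_zero (fun i hi => (hA i hi).2) hlow',
    comp_C_mul_X_coeff] at hcoeff
  have hgm : g.coeff m ≠ 0 := mt trailingCoeff_eq_zero.mp hg
  exact (mul_eq_zero.1 (by linear_combination hcoeff :
    (A₁.coeff i₀ + A₂.coeff i₀ * γ ^ m) * g.coeff m = 0)).resolve_right hgm

theorem natTrailingDegree_eq_of_mul_add_mul_comp_eq_zero {g' : R[X]} (hA : A₁ ≠ 0 ∨ A₂ ≠ 0)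
    (hg : g ≠ 0) (hg' : g' ≠ 0) (hdeg : g.natDegree < orderOf γ)
    (hdeg' : g'.natDegree < orderOf γ) (h : A₁ * g + A₂ * g.comp (C γ * X) = 0)
    (h' : A₁ * g' + A₂ * g'.comp (C γ * X) = 0) :
    g.natTrailingDegree = g'.natTrailingDegree := by
  have hex : ∃ i, ¬(A₁.coeff i = 0 ∧ A₂.coeff i = 0) := by
    by_contra! hall
    rcases hA with hA | hA <;> exact hA (ext fun i => by simp [hall i])
  have hmin : ∀ i < Nat.find hex, A₁.coeff i = 0 ∧ A₂.coeff i = 0 := fun i hi =>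
    not_not.1 (Nat.find_min hex hi)
  have e := coeff_add_mul_pow_natTrailingDegree_eq_zero hmin hg h
  have e' := coeff_add_mul_pow_natTrailingDegree_eq_zero hmin hg' h'
  have hA₂ : A₂.coeff (Nat.find hex) ≠ 0 := fun h0 => by
    rw [h0, zero_mul, add_zero] at e
    exact Nat.find_spec hex ⟨e, h0⟩
  exact pow_injOn_Iio_orderOf (x := γ) ((natTrailingDegree_le_natDegree g).trans_lt hdeg)
    ((natTrailingDegree_le_natDegree g').trans_lt hdeg')
    (mul_left_cancel₀ hA₂ (by linear_combination e - e'))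

theorem exists_eq_zero_of_coeff_eq_zero_of_mul_add_mul_comp_eq_zero {k : ℕ}
    (hA : A₁ ≠ 0 ∨ A₂ ≠ 0) (hk : k ≤ orderOf γ) :
    ∃ j, ∀ g : R[X], g.natDegree < k → A₁ * g + A₂ * g.comp (C γ * X) = 0 →
      g.coeff j = 0 → g = 0 := by
  by_cases hsol : ∃ g₀ : R[X], g₀ ≠ 0 ∧ g₀.natDegree < k ∧ A₁ * g₀ + A₂ * g₀.comp (C γ * X) = 0
  · obtain ⟨g₀, hg₀, hdeg₀, h₀⟩ := hsol
    refine ⟨g₀.natTrailingDegree, fun g hdeg h hj => by_contra fun hg => ?_⟩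
    rw [← natTrailingDegree_eq_of_mul_add_mul_comp_eq_zero hA hg hg₀ (by omega) (by omega) h h₀]
      at hj
    exact hg (trailingCoeff_eq_zero.1 hj)
  · push Not at hsol
    exact ⟨0, fun g hdeg h _ => by_contra fun hg => hsol g hg hdeg h⟩

theorem exists_injOn_coeff_of_add_mul_add_mul_comp_eq_zero {A₀ : R[X]} {k : ℕ}
    (hA : (A₀, A₁, A₂) ≠ 0) (hk : k ≤ orderOf γ) :
    ∃ j, Set.InjOn (fun f : R[X] => f.coeff j)
      {f | f.natDegree < k ∧ A₀ + A₁ * f + A₂ * f.comp (C γ * X) = 0} := by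
  by_cases h₁₂ : A₁ = 0 ∧ A₂ = 0
  · obtain ⟨rfl, rfl⟩ := h₁₂
    refine ⟨0, fun f hf => absurd ?_ hA⟩
    simp_all
  · obtain ⟨j, hj⟩ := exists_eq_zero_of_coeff_eq_zero_of_mul_add_mul_comp_eq_zero (by tauto) hk
    refine ⟨j, fun f hf f' hf' hff' => sub_eq_zero.1 (hj _ ?_ ?_ ?_)⟩
    · exact (natDegree_sub_le f f').trans_lt (max_lt hf.1 hf'.1)
    · rw [sub_comp]
      linear_combination hf.2 - hf'.2
    · simpa [coeff_sub, sub_eq_zero] using hff'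

end ShiftEquation

theorem exists_ne_zero_eval_add_mul_add_mul_eq_zero {F : Type*} [Field F] {n a b c : ℕ}
    (hn : n < a + b + c) (x y z : Fin n → F) :
    ∃ A : F[X] × F[X] × F[X], A ≠ 0 ∧ A.1 ∈ F[X]_a ∧ A.2.1 ∈ F[X]_b ∧ A.2.2 ∈ F[X]_c ∧
      ∀ i, A.1.eval (x i) + A.2.1.eval (x i) * y i + A.2.2.eval (x i) * z i = 0 := by
  let L : (F[X]_a × F[X]_b × F[X]_c) →ₗ[F] Fin n → F :=
    { toFun := fun A i => (A.1 : F[X]).eval (x i) + (A.2.1 : F[X]).eval (x i) * y i +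
        (A.2.2 : F[X]).eval (x i) * z i
      map_add' := fun _ _ => by
        ext
        simp only [Prod.fst_add, Prod.snd_add, Submodule.coe_add, eval_add, Pi.add_apply]
        ring
      map_smul' := fun _ _ => by
        ext
        simp only [Prod.smul_fst, Prod.smul_snd, Submodule.coe_smul, eval_smul, smul_eq_mul,
          RingHom.id_apply, Pi.smul_apply]
        ring }
  have : ∀ m, FiniteDimensional F F[X]_m := fun m =>
    LinearEquiv.finiteDimensional (degreeLTEquiv F m).symm
  have hdim : Module.finrank F (Fin n → F) < Module.finrank F (F[X]_a × F[X]_b × F[X]_c) := by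
    rw [Module.finrank_prod, Module.finrank_prod, (degreeLTEquiv F a).finrank_eq,
      (degreeLTEquiv F b).finrank_eq, (degreeLTEquiv F c).finrank_eq]
    simp only [Module.finrank_fin_fun]
    omega
  obtain ⟨A, hAker, hA⟩ := Submodule.exists_mem_ne_zero_of_ne_bot
    (LinearMap.ker_ne_bot_of_finrank_lt (f := L) hdim)
  refine ⟨(A.1, A.2.1, A.2.2), ?_, A.1.2, A.2.1.2, A.2.2.2, congrFun (LinearMap.mem_ker.1 hAker)⟩
  intro h
  simp only [Prod.mk_eq_zero] at h
  exact hA (Prod.ext (Subtype.ext h.1) (Prod.ext (Subtype.ext h.2.1) (Subtype.ext h.2.2)))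

def cycSucc {n : ℕ} (i : Fin n) : Fin n := ⟨(i.1 + 1) % n, Nat.mod_lt _ i.pos⟩

theorem le_card_agree_add_pairDist {α : Type*} [DecidableEq α] {n : ℕ} (x y : Fin n → α) :
    n ≤ #{i : Fin n | i.1 + 1 < n ∧ x i = y i ∧ x (cycSucc i) = y (cycSucc i)} +
      pairDist x y + 1 := by
  have hsplit := card_filter_add_card_filter_not (s := (univ : Finset (Fin n)))
    (fun i : Fin n => i.1 + 1 < n ∧ x i = y i ∧ x (cycSucc i) = y (cycSucc i))
  have hsub : univ.filter (fun i : Fin n =>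
        ¬(i.1 + 1 < n ∧ x i = y i ∧ x (cycSucc i) = y (cycSucc i))) ⊆
      univ.filter (fun i => (x i, x (cycSucc i)) ≠ (y i, y (cycSucc i))) ∪
        univ.filter (fun i : Fin n => ¬ i.1 + 1 < n) := by
    intro i
    simp only [mem_filter, mem_univ, true_and, mem_union, ne_eq, Prod.mk.injEq]
    tauto
  have hlast : #{i : Fin n | ¬ i.1 + 1 < n} ≤ 1 :=
    card_le_one.2 fun i hi j hj => by simp only [mem_filter] at hi hj; omega
  have := (card_le_card hsub).trans (card_union_le _ _)
  rw [card_univ, Fintype.card_fin] at hsplit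
  have hdist : #{i : Fin n | (x i, x (cycSucc i)) ≠ (y i, y (cycSucc i))} = pairDist x y := rfl
  omega

/-- The wrap-around position `i = n - 1` is not used: `γ ^ n` need not be `1`, so there
`y (cycSucc i)` is not a value of `f(γX)`. -/
theorem add_mul_add_mul_comp_eq_zero_of_pairDist_lt {F : Type*} [Field F] [DecidableEq F]
    {γ : F} {n D k : ℕ} (hn : n ≤ orderOf γ) {A₀ A₁ A₂ f : F[X]} {y : Fin n → F}
    (hA₀ : A₀ ∈ F[X]_(D + k)) (hA₁ : A₁ ∈ F[X]_(D + 1)) (hA₂ : A₂ ∈ F[X]_(D + 1))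
    (hf : f.natDegree < k)
    (hQ : ∀ i : Fin n, A₀.eval (γ ^ (i : ℕ)) + A₁.eval (γ ^ (i : ℕ)) * y i +
      A₂.eval (γ ^ (i : ℕ)) * y (cycSucc i) = 0)
    (hd : D + k + pairDist y (fun i => f.eval (γ ^ (i : ℕ))) < n) :
    A₀ + A₁ * f + A₂ * f.comp (C γ * X) = 0 := by
  set c : Fin n → F := fun i => f.eval (γ ^ (i : ℕ))
  have hS := le_card_agree_add_pairDist y c
  set S := univ.filter fun i : Fin n => i.1 + 1 < n ∧ y i = c i ∧ y (cycSucc i) = c (cycSucc i)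
  have hvanish : ∀ i ∈ S, (A₀ + A₁ * f + A₂ * f.comp (C γ * X)).eval (γ ^ (i : ℕ)) = 0 := by
    intro i hi
    obtain ⟨hlt, hy, hy'⟩ := (mem_filter.1 hi).2
    have hsucc : (cycSucc i : ℕ) = i + 1 := Nat.mod_eq_of_lt hlt
    have hQi := hQ i
    simp only [c, hsucc] at hy hy'
    rw [hy, hy', pow_succ'] at hQi
    simp only [eval_add, eval_mul, eval_comp, eval_C, eval_X]
    exact hQi
  have hinj : Set.InjOn (fun i : Fin n => γ ^ (i : ℕ)) S := fun i _ j _ h =>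
    Fin.ext (pow_injOn_Iio_orderOf (x := γ) (i.2.trans_le hn) (j.2.trans_le hn) h)
  have hcomp : (f.comp (C γ * X)).natDegree ≤ f.natDegree :=
    natDegree_le_iff_coeff_eq_zero.2 fun j hj => by
      rw [comp_C_mul_X_coeff, coeff_eq_zero_of_natDegree_lt hj, zero_mul]
  have hdeg : (A₀ + A₁ * f + A₂ * f.comp (C γ * X)).natDegree < #S := by
    have h₀ := natDegree_lt_of_mem_degreeLT (by omega) hA₀
    have h₁ := natDegree_lt_of_mem_degreeLT (by omega) hA₁
    have h₂ := natDegree_lt_of_mem_degreeLT (by omega) hA₂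
    have := natDegree_mul_le (p := A₁) (q := f)
    have := natDegree_mul_le (p := A₂) (q := f.comp (C γ * X))
    have := natDegree_add_le (A₀ + A₁ * f) (A₂ * f.comp (C γ * X))
    have := natDegree_add_le A₀ (A₁ * f)
    omega
  exact eq_zero_of_degree_lt_of_eval_index_eq_zero S hinj
    (degree_le_natDegree.trans_lt (by exact_mod_cast hdeg)) hvanish

/-- Let `F` be the finite field of size `q`, `γ` a primitive element of `F`, and
`1 ≤ k ≤ n − 2`, `n ≤ q − 1`. The Reed–Solomon code
`RS[n,k] = {(f(1), f(γ), …, f(γ^{n−1})) : deg f ≤ k−1}` is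
`((2/3)(n−2−k), q)_P`-list decodable: for every `y ∈ F_q^n` the number of codewords
`c ∈ RS[n,k]` with `d_P(y, c) ≤ (2/3)(n−2−k)` is at most `q`. -/
theorem RS_pair_list_decodable {F : Type*} [Field F] [Fintype F] [DecidableEq F]
    {q n k : ℕ} (hq : Fintype.card F = q)
    (γ : F) (hγ : orderOf γ = q - 1)
    (hk : 1 ≤ k) (hkn : k ≤ n - 2) (hnq : n ≤ q - 1)
    (y : Fin n → F) :
    (Finset.univ.filter fun c : Fin n → F =>
      (∃ f : Polynomial F, f.natDegree ≤ k - 1 ∧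
        c = fun i : Fin n => f.eval (γ ^ (i : ℕ))) ∧
      (pairDist y c : ℝ) ≤ 2 / 3 * ((n : ℝ) - 2 - (k : ℝ))).card ≤ q := by
  -- `3D + k + 2 > n` gives the interpolant, `D + k + d < n` the vanishing
  set D := (n - k + 1) / 3
  obtain ⟨⟨A₀, A₁, A₂⟩, hA, hA₀, hA₁, hA₂, hQ⟩ :=
    exists_ne_zero_eval_add_mul_add_mul_eq_zero (a := D + k) (b := D + 1) (c := D + 1)
      (by omega) (fun i => γ ^ (i : ℕ)) y (fun i => y (cycSucc i))
  obtain ⟨j, hj⟩ :=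
    exists_injOn_coeff_of_add_mul_add_mul_comp_eq_zero (γ := γ) (k := k) hA (by omega)
  rw [← hq]
  refine card_le_card_of_subset_image_of_injOn (fun f i => f.eval (γ ^ (i : ℕ))) hj
    fun c hc => ?_
  obtain ⟨⟨f, hf, rfl⟩, hd⟩ := (mem_filter.1 hc).2
  have hd' : 3 * pairDist y (fun i : Fin n => f.eval (γ ^ (i : ℕ))) ≤ 2 * (n - 2 - k) := by
    rw [← Nat.cast_le (α := ℝ)]
    push_cast [Nat.cast_sub hkn, Nat.cast_sub (show 2 ≤ n by omega)]
    linarith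
  exact ⟨f, ⟨by omega, add_mul_add_mul_comp_eq_zero_of_pairDist_lt (by omega) hA₀ hA₁ hA₂
    (by omega) hQ (by omega)⟩, rfl⟩
end
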